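/- arXiv:1010.5673 — 2 statements merged into one kernel-verified Lean document; each statement's English description precedes it below -/
import Mathlib

section
/- For every n ≥ 1, there is a bijection on the set of ordered trees with n edges carrying trees with exactly k exterior edges to trees with exactly k edges at level h with h ≡ 0 (mod 3), for every 0 ≤ k ≤ n-2. In particular, for each k the number of ordered trees with n edges and k exterior edges equals the number of ordered trees with n edges and k edges at level divisible by 3. -/
/-- An ordered (plane) tree: an unlabeled rooted tree where the order of the subtrees
of each vertex is significant. -/
inductive OTree where
  | node : List OTree → OTree

namespace OTree

/-- The number of edges of an ordered tree. -/
def numEdges : OTree → ℕ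
  | .node ts => (ts.attach.map (fun c => numEdges c.1 + 1)).sum
  decreasing_by
    simp_wf
    have := List.sizeOf_lt_of_mem c.2
    simp at this ⊢
    omega


/-- The number of leaves of an ordered tree (a tree with no edges has one leaf,
its root). -/
def numLeaves : OTree → ℕ
  | .node [] => 1
  | .node (t :: ts) => ((t :: ts).attach.map (fun c => numLeaves c.1)).sum
  decreasing_by
    simp_wf
    have := List.sizeOf_lt_of_mem c.2
    simp at this ⊢
    omega


/-- The number of exterior edges: edges `uv` such that the planted subtree consisting
of `uv` and all descendants of `v` has at least two leaves. -/
def extEdges : OTree → ℕ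
  | .node ts => (ts.attach.map
      (fun c => (if 2 ≤ numLeaves c.1 then 1 else 0) + extEdges c.1)).sum
  decreasing_by
    simp_wf
    have := List.sizeOf_lt_of_mem c.2
    simp at this ⊢
    omega


/-- `edgesAtLevelFrom t cur h` is the number of edges of `t` at level `h`, where the
root of `t` is at distance `cur` from the global root (the level of an edge `uv` is
the distance from the root to the child `v`). -/
def edgesAtLevelFrom (t : OTree) (cur h : ℕ) : ℕ :=
  match t with
  | .node ts => (ts.attach.map
      (fun c => (if cur + 1 = h then 1 else 0) + edgesAtLevelFrom c.1 (cur + 1) h)).sum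
  termination_by t
  decreasing_by
    simp_wf
    have := List.sizeOf_lt_of_mem c.2
    simp at this ⊢
    omega


/-- The number of edges of `t` at level `h`. -/
def edgesAtLevel (t : OTree) (h : ℕ) : ℕ := edgesAtLevelFrom t 0 h

/-- `edgesLevelModFrom t cur m c`: the number of edges of `t` at level `h` with
`h ≡ c (mod m)`, the root being at distance `cur` from the global root. -/
def edgesLevelModFrom (t : OTree) (cur m c : ℕ) : ℕ :=
  match t with
  | .node ts => (ts.attach.map
      (fun x => (if (cur + 1) % m = c then 1 else 0) +
        edgesLevelModFrom x.1 (cur + 1) m c)).sum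
  termination_by t
  decreasing_by
    simp_wf
    have := List.sizeOf_lt_of_mem x.2
    simp at this ⊢
    omega


/-- The number of edges of `t` at level `h` with `h ≡ c (mod m)`. -/
def edgesLevelMod (t : OTree) (m c : ℕ) : ℕ := edgesLevelModFrom t 0 m c

/-- The preorder traversal word of an ordered tree: each edge contributes a `true`
(up step) when first passed going down and a `false` (down step) when passed going
up. -/
def toPath : OTree → List Bool
  | .node ts => (ts.attach.map (fun c => true :: (toPath c.1 ++ [false]))).flatten
  decreasing_by
    simp_wf
    have := List.sizeOf_lt_of_mem c.2
    simp at this ⊢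
    omega


end OTree

/-! Cutting off the first subtree of the root identifies a nonempty ordered tree with a pair
of ordered trees. Let `Aᵢ(x, q)` count trees by edges (`x`) and by edges at level
`≡ 0 (mod 3)` (`q`) when the root sits at depth `i`. The first subtree hangs one level
deeper, so `A₀ = 1 + x A₁ A₀`, `A₁ = 1 + x A₂ A₁`, `A₂ = 1 + x q A₀ A₂`. For the series
`G(x, q)` of exterior edges, `G = 1 + x H G`, where `H` counts planted trees: the edge above
the first subtree is exterior unless that subtree is a path, so `H = q G + (1 - q)/(1 - x)`.
Eliminating, `A₀` and `G` are roots of the same quadratic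
`x q (x - 1) F² + (1 - 2x + x q) F + (x - 1)`, and two roots `F₁, F₂` coincide because
`x q (x - 1) (F₁ + F₂) + (1 - 2x + x q)` has constant term `1`. Equal fibre sizes of the two
statistics then give the bijection. -/

theorem eq_of_quadratic_eq_zero {R : Type*} [CommRing R] {a b c d e : R}
    (ha : c * a ^ 2 + d * a + e = 0) (hb : c * b ^ 2 + d * b + e = 0)
    (hu : IsUnit (c * (a + b) + d)) : a = b := by
  have h : (a - b) * (c * (a + b) + d) = 0 := by linear_combination ha - hb
  exact sub_eq_zero.mp (hu.mul_left_eq_zero.mp h)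

theorem exists_equiv_comp_eq_of_card_fiber_eq {α β : Type*} [Finite α] {f g : α → β}
    (h : ∀ b, Nat.card {a // f a = b} = Nat.card {a // g a = b}) :
    ∃ σ : α ≃ α, ∀ a, g (σ a) = f a :=
  ⟨Equiv.ofFiberEquiv fun b => (Finite.card_eq.mp (h b)).some, Equiv.ofFiberEquiv_map _⟩

theorem Finset.card_filter_eq_of_sum_X_pow_eq {ι : Type*} {s : Finset ι} {f g : ι → ℕ}
    (h : ∑ i ∈ s, (Polynomial.X : Polynomial ℤ) ^ f i = ∑ i ∈ s, Polynomial.X ^ g i) (k : ℕ) :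
    (s.filter (f · = k)).card = (s.filter (g · = k)).card := by
  have := congrArg (Polynomial.coeff · k) h
  simpa [Polynomial.finsetSum_coeff, Polynomial.coeff_X_pow, Finset.sum_boole, eq_comm] using this

namespace OTree

def cons (a : OTree) : OTree → OTree
  | node ts => node (a :: ts)

@[simp] theorem cons_ne_nil (a b : OTree) : cons a b ≠ node [] := by
  cases b; simp [cons]

theorem cons_eq_cons {a a' b b' : OTree} : cons a b = cons a' b' ↔ a = a' ∧ b = b' := by
  cases b; cases b'; simp [cons]

theorem eq_nil_or_exists_cons (t : OTree) : t = node [] ∨ ∃ a b, t = cons a b := by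
  obtain ⟨_ | ⟨a, ts⟩⟩ := t
  · exact .inl rfl
  · exact .inr ⟨a, node ts, rfl⟩

@[elab_as_elim]
theorem cons_induction {P : OTree → Prop} (nil : P (node []))
    (cons : ∀ a b, P a → P b → P (cons a b)) : ∀ t, P t
  | node [] => nil
  | node (a :: ts) =>
    cons a (node ts) (cons_induction nil cons a) (cons_induction nil cons (node ts))

theorem numEdges_node (ts : List OTree) :
    numEdges (node ts) = (ts.map fun t => numEdges t + 1).sum := by
  rw [numEdges, List.attach_map_val (f := fun t => numEdges t + 1)]

theorem numLeaves_node_cons (a : OTree) (ts : List OTree) :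
    numLeaves (node (a :: ts)) = numLeaves a + (ts.map numLeaves).sum := by
  rw [numLeaves, List.attach_map_val (f := numLeaves), List.map_cons, List.sum_cons]

theorem extEdges_node (ts : List OTree) :
    extEdges (node ts) =
      (ts.map fun t => (if 2 ≤ numLeaves t then 1 else 0) + extEdges t).sum := by
  rw [extEdges,
    List.attach_map_val (f := fun t => (if 2 ≤ numLeaves t then 1 else 0) + extEdges t)]

theorem edgesLevelModFrom_node (ts : List OTree) (cur m c : ℕ) :
    edgesLevelModFrom (node ts) cur m c =
      (ts.map fun t => (if (cur + 1) % m = c then 1 else 0) +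
        edgesLevelModFrom t (cur + 1) m c).sum := by
  rw [edgesLevelModFrom, List.attach_map_val (f := fun t =>
    (if (cur + 1) % m = c then 1 else 0) + edgesLevelModFrom t (cur + 1) m c)]

@[simp] theorem numEdges_nil : numEdges (node []) = 0 := by simp [numEdges_node]

@[simp] theorem numEdges_cons (a b : OTree) :
    numEdges (cons a b) = numEdges a + 1 + numEdges b := by
  cases b; simp [cons, numEdges_node]

@[simp] theorem extEdges_nil : extEdges (node []) = 0 := by simp [extEdges_node]

@[simp] theorem extEdges_cons (a b : OTree) :
    extEdges (cons a b) = extEdges (node [a]) + extEdges b := by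
  cases b; simp [cons, extEdges_node]

theorem extEdges_singleton (a : OTree) :
    extEdges (node [a]) = (if 2 ≤ numLeaves a then 1 else 0) + extEdges a := by
  simp [extEdges_node]

@[simp] theorem edgesLevelModFrom_nil (cur m c : ℕ) :
    edgesLevelModFrom (node []) cur m c = 0 := by
  simp [edgesLevelModFrom_node]

@[simp] theorem edgesLevelModFrom_cons (a b : OTree) (cur m c : ℕ) :
    edgesLevelModFrom (cons a b) cur m c =
      (if (cur + 1) % m = c then 1 else 0) + edgesLevelModFrom a (cur + 1) m c +
        edgesLevelModFrom b cur m c := by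
  cases b; simp [cons, edgesLevelModFrom_node, add_assoc]

theorem edgesLevelModFrom_add_self (t : OTree) (cur m c : ℕ) :
    edgesLevelModFrom t (cur + m) m c = edgesLevelModFrom t cur m c := by
  induction t using cons_induction generalizing cur with
  | nil => simp
  | cons a b iha ihb =>
    rw [edgesLevelModFrom_cons, edgesLevelModFrom_cons, ihb, Nat.add_right_comm cur m 1, iha,
      Nat.add_mod_right]

theorem one_le_numLeaves (t : OTree) : 1 ≤ numLeaves t := by
  induction t using cons_induction with
  | nil => simp [numLeaves]
  | cons a b iha _ => cases b; simp only [cons, numLeaves_node_cons]; omega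

def chain : ℕ → OTree
  | 0 => node []
  | n + 1 => node [chain n]

@[simp] theorem numEdges_chain (n : ℕ) : numEdges (chain n) = n := by
  induction n with
  | zero => simp [chain]
  | succ n ih => simp [chain, numEdges_node, ih]

@[simp] theorem numLeaves_chain (n : ℕ) : numLeaves (chain n) = 1 := by
  induction n with
  | zero => simp [chain, numLeaves]
  | succ n ih => simp [chain, numLeaves_node_cons, ih]

@[simp] theorem extEdges_chain (n : ℕ) : extEdges (chain n) = 0 := by
  induction n with
  | zero => simp [chain]
  | succ n ih => simp [chain, extEdges_singleton, ih]

theorem eq_chain_of_numLeaves_le_one {t : OTree} (h : numLeaves t ≤ 1) :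
    t = chain (numEdges t) := by
  induction t using cons_induction with
  | nil => simp [chain]
  | cons a b iha _ =>
    obtain ⟨_ | ⟨c, ts⟩⟩ := b
    · have ha : numLeaves a ≤ 1 := by simpa [cons, numLeaves_node_cons] using h
      calc node [a] = node [chain (numEdges a)] := congrArg (fun x => node [x]) (iha ha)
        _ = chain (numEdges (node [a])) := by simp [chain, numEdges_node]
    · have := one_le_numLeaves a
      have := one_le_numLeaves c
      simp only [cons, numLeaves_node_cons, List.map_cons, List.sum_cons] at h
      omega

theorem finite_setOf_numEdges_le (n : ℕ) : {t : OTree | numEdges t ≤ n}.Finite := by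
  induction n with
  | zero =>
    refine (Set.finite_singleton (node [])).subset fun t ht => ?_
    obtain rfl | ⟨a, b, rfl⟩ := eq_nil_or_exists_cons t
    · rfl
    · simp at ht
  | succ n ih =>
    refine ((ih.image2 cons ih).insert (node [])).subset fun t ht => ?_
    obtain rfl | ⟨a, b, rfl⟩ := eq_nil_or_exists_cons t
    · exact Set.mem_insert _ _
    · simp only [Set.mem_ofPred_eq, numEdges_cons] at ht
      exact .inr ⟨a, show numEdges a ≤ n by omega, b, show numEdges b ≤ n by omega, rfl⟩

instance (n : ℕ) : Finite {t : OTree // numEdges t = n} :=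
  ((finite_setOf_numEdges_le n).subset fun _ h => le_of_eq h).to_subtype

noncomputable def withEdges (n : ℕ) : Finset OTree :=
  (finite_setOf_numEdges_le n).toFinset.filter (numEdges · = n)

@[simp] theorem mem_withEdges {t : OTree} {n : ℕ} : t ∈ withEdges n ↔ numEdges t = n := by
  simp +contextual [withEdges]

theorem withEdges_zero : withEdges 0 = {node []} := by
  ext t
  obtain rfl | ⟨a, b, rfl⟩ := eq_nil_or_exists_cons t <;> simp

open Finset in
theorem sum_withEdges_succ {M : Type*} [AddCommMonoid M] (f : OTree → M) (n : ℕ) :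
    ∑ t ∈ withEdges (n + 1), f t =
      ∑ p ∈ antidiagonal n, ∑ a ∈ withEdges p.1, ∑ b ∈ withEdges p.2, f (cons a b) := by
  simp_rw [← sum_product', sum_sigma']
  symm
  refine sum_nbij (fun x => cons x.2.1 x.2.2) ?_ ?_ ?_ fun _ _ => rfl
  · rintro ⟨p, a, b⟩ h
    simp only [mem_sigma, HasAntidiagonal.mem_antidiagonal, mem_product, mem_withEdges] at h
    simp only [mem_withEdges, numEdges_cons]
    omega
  · rintro ⟨p, a, b⟩ h ⟨p', a', b'⟩ h' hcons
    simp only [coe_sigma, Set.mem_sigma_iff, mem_coe, HasAntidiagonal.mem_antidiagonal, mem_product,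
      mem_withEdges] at h h'
    obtain ⟨rfl, rfl⟩ := cons_eq_cons.mp hcons
    obtain rfl : p = p' := Prod.ext (h.2.1.symm.trans h'.2.1) (h.2.2.symm.trans h'.2.2)
    rfl
  · intro t ht
    obtain rfl | ⟨a, b, rfl⟩ := eq_nil_or_exists_cons t
    · simp at ht
    · simp only [mem_coe, mem_withEdges, numEdges_cons] at ht
      refine ⟨⟨(numEdges a, numEdges b), a, b⟩, ?_, rfl⟩
      simpa [HasAntidiagonal.mem_antidiagonal] using (by omega : numEdges a + numEdges b = n)

theorem natCard_eq_card_filter_withEdges (s : OTree → ℕ) (n k : ℕ) :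
    Nat.card {t : OTree // t.numEdges = n ∧ s t = k} = ((withEdges n).filter (s · = k)).card := by
  rw [← Nat.card_eq_finsetCard]
  exact Nat.card_congr (Equiv.subtypeEquivRight fun t => by simp)

section GeneratingSeries

open PowerSeries

/-- `PowerSeries.X` marks edges and the coefficient variable `Polynomial.X` marks the
statistic `s`. -/
noncomputable def genSeries (s : OTree → ℕ) : PowerSeries (Polynomial ℤ) :=
  mk fun n => ∑ t ∈ withEdges n, Polynomial.X ^ s t

theorem coeff_genSeries (s : OTree → ℕ) (n : ℕ) :
    coeff n (genSeries s) = ∑ t ∈ withEdges n, Polynomial.X ^ s t :=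
  coeff_mk _ _

theorem genSeries_eq_one_add_X_mul {w u v : OTree → ℕ} (h_nil : w (node []) = 0)
    (h_cons : ∀ a b, w (cons a b) = u a + v b) :
    genSeries w = 1 + X * (genSeries u * genSeries v) := by
  ext1 n
  cases n with
  | zero => simp [coeff_genSeries, withEdges_zero, h_nil]
  | succ n =>
    rw [coeff_genSeries, sum_withEdges_succ, map_add, coeff_succ_X_mul, coeff_mul]
    simp [coeff_genSeries, Finset.sum_mul_sum, h_cons, pow_add]

theorem genSeries_add_one (s : OTree → ℕ) :
    genSeries (fun t => s t + 1) = C Polynomial.X * genSeries s := by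
  ext1 n
  simp [coeff_genSeries, pow_succ, Finset.mul_sum, mul_comm]

theorem X_pow_extEdges_singleton_of_ne_chain {t : OTree} (h : t ≠ chain (numEdges t)) :
    (Polynomial.X : Polynomial ℤ) ^ extEdges (node [t]) =
      Polynomial.X * Polynomial.X ^ extEdges t := by
  have : 2 ≤ numLeaves t := by
    by_contra! hle
    exact h (eq_chain_of_numLeaves_le_one (Nat.le_of_lt_succ hle))
  rw [extEdges_singleton, if_pos this, pow_add, pow_one]

theorem genSeries_extEdges_singleton :
    genSeries (fun t => extEdges (node [t])) =
      C Polynomial.X * genSeries extEdges + (1 - C Polynomial.X) * mk 1 := by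
  ext1 n
  have h_chain : ∑ t ∈ withEdges n,
      (Polynomial.X ^ extEdges (node [t]) - Polynomial.X * Polynomial.X ^ extEdges t) =
        (1 - Polynomial.X : Polynomial ℤ) := by
    rw [Finset.sum_eq_single_of_mem (chain n) (by simp)]
    · simp [extEdges_singleton]
    · intro t ht hne
      rw [mem_withEdges] at ht
      subst ht
      rw [X_pow_extEdges_singleton_of_ne_chain hne, sub_self]
  rw [Finset.sum_sub_distrib, sub_eq_iff_eq_add] at h_chain
  simp [coeff_genSeries, h_chain, Finset.mul_sum, sub_mul, add_comm]

theorem genSeries_edgesLevelModFrom_quadratic :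
    X * C Polynomial.X * (X - 1) * genSeries (edgesLevelModFrom · 0 3 0) ^ 2 +
      (1 - 2 * X + X * C Polynomial.X) * genSeries (edgesLevelModFrom · 0 3 0) + (X - 1) = 0 := by
  have e0 : genSeries (edgesLevelModFrom · 0 3 0) = 1 + X *
      (genSeries (edgesLevelModFrom · 1 3 0) * genSeries (edgesLevelModFrom · 0 3 0)) :=
    genSeries_eq_one_add_X_mul (by simp) fun a b => by simp
  have e1 : genSeries (edgesLevelModFrom · 1 3 0) = 1 + X *
      (genSeries (edgesLevelModFrom · 2 3 0) * genSeries (edgesLevelModFrom · 1 3 0)) :=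
    genSeries_eq_one_add_X_mul (by simp) fun a b => by simp
  have e2 : genSeries (edgesLevelModFrom · 2 3 0) = 1 + X *
      (C Polynomial.X * genSeries (edgesLevelModFrom · 0 3 0) *
        genSeries (edgesLevelModFrom · 2 3 0)) := by
    rw [← genSeries_add_one]
    refine genSeries_eq_one_add_X_mul (by simp) fun a b => ?_
    have h_period : edgesLevelModFrom a 3 3 0 = edgesLevelModFrom a 0 3 0 := by
      simpa using edgesLevelModFrom_add_self a 0 3 0
    simp [h_period, add_comm]
  generalize genSeries (edgesLevelModFrom · 0 3 0) = A₀ at *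
  generalize genSeries (edgesLevelModFrom · 1 3 0) = A₁ at *
  generalize genSeries (edgesLevelModFrom · 2 3 0) = A₂ at *
  generalize (C Polynomial.X : PowerSeries (Polynomial ℤ)) = q at *
  linear_combination (1 - X * q * A₀) * ((1 - X * A₂) * e0 + X * A₀ * e1) + (X * A₀ - X) * e2

theorem genSeries_extEdges_quadratic :
    X * C Polynomial.X * (X - 1) * genSeries extEdges ^ 2 +
      (1 - 2 * X + X * C Polynomial.X) * genSeries extEdges + (X - 1) = 0 := by
  have e_ext : genSeries extEdges =
      1 + X * (genSeries (fun t => extEdges (node [t])) * genSeries extEdges) :=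
    genSeries_eq_one_add_X_mul extEdges_nil extEdges_cons
  have e_planted := genSeries_extEdges_singleton
  have e_geom := mk_one_mul_one_sub_eq_one (Polynomial ℤ)
  generalize genSeries extEdges = G at *
  generalize genSeries (fun t => extEdges (node [t])) = H at *
  generalize (C Polynomial.X : PowerSeries (Polynomial ℤ)) = q at *
  linear_combination (1 - X) * e_ext + X * (1 - X) * G * e_planted + X * (1 - q) * G * e_geom

theorem genSeries_edgesLevelMod_eq_genSeries_extEdges :
    genSeries (edgesLevelMod · 3 0) = genSeries extEdges :=
  eq_of_quadratic_eq_zero genSeries_edgesLevelModFrom_quadratic genSeries_extEdges_quadratic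
    (by rw [isUnit_iff_constantCoeff]; simp)

end GeneratingSeries

theorem natCard_extEdges_eq_natCard_edgesLevelMod (n k : ℕ) :
    Nat.card {t : OTree // t.numEdges = n ∧ t.extEdges = k} =
      Nat.card {t : OTree // t.numEdges = n ∧ t.edgesLevelMod 3 0 = k} := by
  rw [natCard_eq_card_filter_withEdges, natCard_eq_card_filter_withEdges]
  refine (Finset.card_filter_eq_of_sum_X_pow_eq ?_ k).symm
  simpa [coeff_genSeries] using
    congrArg (PowerSeries.coeff n) genSeries_edgesLevelMod_eq_genSeries_extEdges

end OTree

theorem otree_exterior_edges_equidistributed_general (n : ℕ) :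
    (∃ Φ : {t : OTree // t.numEdges = n} ≃ {t : OTree // t.numEdges = n},
      ∀ t : {t : OTree // t.numEdges = n},
        (Φ t : OTree).edgesLevelMod 3 0 = (t : OTree).extEdges) ∧
    ∀ k : ℕ, k ≤ n - 2 →
      Nat.card {t : OTree // t.numEdges = n ∧ t.extEdges = k} =
        Nat.card {t : OTree // t.numEdges = n ∧ t.edgesLevelMod 3 0 = k} := by
  refine ⟨?_, fun k _ => OTree.natCard_extEdges_eq_natCard_edgesLevelMod n k⟩
  refine exists_equiv_comp_eq_of_card_fiber_eq (α := {t : OTree // t.numEdges = n})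
    (f := fun t => (t : OTree).extEdges) (g := fun t => (t : OTree).edgesLevelMod 3 0)
    fun k => ?_
  exact (Nat.card_congr (Equiv.subtypeSubtypeEquivSubtypeInter _ _)).trans
    ((OTree.natCard_extEdges_eq_natCard_edgesLevelMod n k).trans
      (Nat.card_congr (Equiv.subtypeSubtypeEquivSubtypeInter _ _)).symm)

/-- There is a bijection on ordered trees with `n` edges carrying trees with exactly
`k` exterior edges to trees with exactly `k` edges at level `h` with `h ≡ 0 (mod 3)`;
in particular, for each `0 ≤ k ≤ n-2` the number of ordered trees with `n` edges and
`k` exterior edges equals the number of ordered trees with `n` edges and `k` edges at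
level divisible by `3`. -/
theorem otree_exterior_edges_equidistributed (n : ℕ) (hn : 1 ≤ n) :
    (∃ Φ : {t : OTree // t.numEdges = n} ≃ {t : OTree // t.numEdges = n},
      ∀ t : {t : OTree // t.numEdges = n},
        (Φ t : OTree).edgesLevelMod 3 0 = (t : OTree).extEdges) ∧
    ∀ k : ℕ, k ≤ n - 2 →
      Nat.card {t : OTree // t.numEdges = n ∧ t.extEdges = k} =
        Nat.card {t : OTree // t.numEdges = n ∧ t.edgesLevelMod 3 0 = k} :=
  otree_exterior_edges_equidistributed_general n
end

section
/- For every m ≥ 2 and n ≥ 1, the number of Dyck paths of semilength n of height at most m-2 equals Σ over n of the coefficient of x^n in U_{m-2}(1/(2√x)) / (√x · U_{m-1}(1/(2√x))), where U_k is the k-th Chebyshev polynomial of the second kind; i.e., this quotient of Chebyshev polynomials, regarded as a power series in x, is the generating function for Dyck paths of height at most m-2. -/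
/-- A Dyck path of semilength `n`, encoded as a list of booleans where
`true` is an up step `(1,1)` and `false` is a down step `(1,-1)`;
the path never goes below the x-axis. -/
def IsDyckPath (n : ℕ) (p : List Bool) : Prop :=
  p.length = 2 * n ∧ p.count true = n ∧
  ∀ i, (p.take i).count false ≤ (p.take i).count true

/-- The height of the path `p` is at most `H`: every prefix stays at level `≤ H`. -/
def HeightLE (p : List Bool) (H : ℕ) : Prop :=
  ∀ i, (p.take i).count true ≤ (p.take i).count false + H

/-- `chebQ k` is the polynomial `x^(k/2) · U_k(1/(2√x))`, written out via the
coefficients of the Chebyshev polynomial of the second kind `U_k`: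
`chebQ k = Σ_{j ≤ k/2} (coeff of t^(k-2j) in U_k) · 2^(2j-k) · x^j`. -/
noncomputable def chebQ (k : ℕ) : Polynomial ℚ :=
  ∑ j ∈ Finset.range (k / 2 + 1),
    Polynomial.C ((Polynomial.Chebyshev.U ℚ k).coeff (k - 2 * j) * 2 ^ (2 * j) / 2 ^ k) *
      Polynomial.X ^ j

/-!
Cutting a nonempty Dyck path of height `≤ H + 1` at its first return to the axis writes it
uniquely as `U q D r` with `q` of height `≤ H` and `r` of height `≤ H + 1`; hence the generating
functions `F_H` of Dyck paths of height `≤ H` satisfy `F_0 = 1` and `F_{H+1} = 1 + x F_H F_{H+1}`.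
Substituting `x = 1 / (4t²)` turns the Chebyshev recurrence `U_{k+2} = 2t U_{k+1} - U_k` into
`Q_{k+2} = Q_{k+1} - x Q_k` for `Q_k = chebQ k`, with `Q_0 = Q_1 = 1`, and then
`F_H Q_{H+1} = Q_H` follows by induction on `H`.
-/

namespace List

variable {α : Type*}

theorem forall_prefix_cons_iff {P : List α → Prop} {a : α} {l : List α} :
    (∀ s, s <+: a :: l → P s) ↔ P [] ∧ ∀ s, s <+: l → P (a :: s) := by
  simp only [prefix_cons_iff]
  aesop

theorem forall_prefix_append_iff {P : List α → Prop} {l₁ l₂ : List α} :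
    (∀ s, s <+: l₁ ++ l₂ → P s) ↔ (∀ s, s <+: l₁ → P s) ∧ ∀ s, s <+: l₂ → P (l₁ ++ s) := by
  induction l₁ generalizing P with
  | nil => simpa using fun h => h [] nil_prefix
  | cons a l ih => simp only [cons_append, forall_prefix_cons_iff, ih, and_assoc]

end List

namespace LatticePath

open List

def level (s : List Bool) : ℤ := s.count true - s.count false

@[simp] theorem level_nil : level [] = 0 := rfl

@[simp] theorem level_cons_true (s : List Bool) : level (true :: s) = level s + 1 := by
  rw [level, level, count_cons_self, count_cons_of_ne (by decide)]
  push_cast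
  ring

@[simp] theorem level_cons_false (s : List Bool) : level (false :: s) = level s - 1 := by
  rw [level, level, count_cons_self, count_cons_of_ne (by decide)]
  push_cast
  ring

@[simp] theorem level_append (s t : List Bool) : level (s ++ t) = level s + level t := by
  rw [level, level, level, count_append, count_append]
  push_cast
  ring

theorem length_eq_two_mul_count_true {s : List Bool} (h : level s = 0) :
    s.length = 2 * s.count true := by
  have := count_true_add_count_false s
  simp only [level] at h
  omega

def IsBoundedExcursion (H : ℕ) (p : List Bool) : Prop :=
  level p = 0 ∧ ∀ s, s <+: p → 0 ≤ level s ∧ level s ≤ H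

theorem isBoundedExcursion_nil (H : ℕ) : IsBoundedExcursion H [] :=
  ⟨rfl, fun s hs => by simp [prefix_nil.mp hs]⟩

theorem isDyckPath_and_heightLE_iff {n H : ℕ} {p : List Bool} :
    IsDyckPath n p ∧ HeightLE p H ↔ p.count true = n ∧ IsBoundedExcursion H p := by
  have := count_true_add_count_false p
  simp only [IsDyckPath, HeightLE, IsBoundedExcursion, level]
  constructor
  · rintro ⟨⟨hlen, hn, hpos⟩, hH⟩
    refine ⟨hn, by omega, fun s hs => ?_⟩
    rw [prefix_iff_eq_take.mp hs]
    have := hpos s.length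
    have := hH s.length
    omega
  · rintro ⟨hn, hp, hs⟩
    refine ⟨⟨by omega, hn, fun i => ?_⟩, fun i => ?_⟩ <;>
    · have := hs _ (take_prefix i p)
      omega

theorem exists_first_descent (p : List Bool) (d : ℕ) (h : level p < -d) :
    ∃ q r, p = q ++ false :: r ∧ level q = -d ∧ ∀ s, s <+: q → -(d : ℤ) ≤ level s := by
  induction p generalizing d with
  | nil => rw [level_nil] at h; omega
  | cons b p ih =>
    cases b with
    | true =>
      rw [level_cons_true] at h
      obtain ⟨q, r, rfl, hq, hs⟩ := ih (d + 1) (by push_cast; linarith)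
      refine ⟨true :: q, r, rfl, by rw [level_cons_true, hq]; push_cast; ring,
        forall_prefix_cons_iff.mpr ⟨by simp, fun s hs' => ?_⟩⟩
      have := hs s hs'
      push_cast at this
      rw [level_cons_true]
      linarith
    | false =>
      rw [level_cons_false] at h
      rcases d with _ | d
      · exact ⟨[], p, rfl, rfl, fun s hs => by simp [prefix_nil.mp hs]⟩
      obtain ⟨q, r, rfl, hq, hs⟩ := ih d (by push_cast at h; linarith)
      refine ⟨false :: q, r, rfl, by rw [level_cons_false, hq]; push_cast; ring,
        forall_prefix_cons_iff.mpr ⟨by simp, fun s hs' => ?_⟩⟩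
      rw [level_cons_false]
      push_cast
      linarith [hs s hs']

def node (q r : List Bool) : List Bool := true :: (q ++ false :: r)

@[simp] theorem count_true_node (q r : List Bool) :
    (node q r).count true = q.count true + r.count true + 1 := by
  simp [node, count_append]

theorem isBoundedExcursion_node {H : ℕ} {q r : List Bool} (hq : IsBoundedExcursion H q)
    (hr : IsBoundedExcursion (H + 1) r) : IsBoundedExcursion (H + 1) (node q r) := by
  obtain ⟨hq0, hq⟩ := hq
  obtain ⟨hr0, hr⟩ := hr
  refine ⟨by simp [LatticePath.node, hq0, hr0], ?_⟩
  simp only [LatticePath.node, forall_prefix_cons_iff, forall_prefix_append_iff, level_cons_true,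
    level_append, level_cons_false, level_nil, hq0]
  push_cast
  refine ⟨⟨trivial, by positivity⟩, fun s hs => ?_, by simp, fun s hs => ?_⟩
  · have := hq s hs
    omega
  · have := hr s hs
    push_cast at this
    omega

theorem IsBoundedExcursion.exists_eq_node {H : ℕ} {p : List Bool}
    (hp : IsBoundedExcursion (H + 1) p) (hne : p ≠ []) :
    ∃ q r, p = node q r ∧ IsBoundedExcursion H q ∧ IsBoundedExcursion (H + 1) r := by
  obtain ⟨hp0, hp⟩ := hp
  obtain ⟨b, p, rfl⟩ := exists_cons_of_ne_nil hne
  obtain rfl : b = true := by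
    have := (hp [b] (by simp)).1
    cases b <;> simp_all
  rw [level_cons_true] at hp0
  obtain ⟨q, r, rfl, hq0, hq⟩ := exists_first_descent p 0 (by push_cast; linarith)
  simp only [forall_prefix_cons_iff, forall_prefix_append_iff, level_cons_true,
    level_append, level_cons_false, level_nil] at hp hp0
  simp only [CharP.cast_eq_zero, neg_zero] at hq0 hq
  refine ⟨q, r, rfl, ⟨hq0, fun s hs => ?_⟩, ⟨by linarith, fun s hs => ?_⟩⟩
  · have := hp.2.1 s hs
    have := hq s hs
    omega
  · have := hp.2.2.2 s hs
    omega

theorem length_le_of_append_false_cons_eq {q q' r r' : List Bool}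
    (h : q ++ false :: r = q' ++ false :: r') (hq : level q = 0)
    (hq' : ∀ s, s <+: q' → 0 ≤ level s) : q'.length ≤ q.length := by
  by_contra! hlt
  have hpre : q ++ [false] <+: q' :=
    prefix_of_prefix_length_le (by rw [h.symm]; simp) (prefix_append q' _)
      (by rw [length_append, length_singleton]; omega)
  have := hq' _ hpre
  simp [hq] at this

theorem IsBoundedExcursion.node_inj {H : ℕ} {q q' r r' : List Bool} (hq : IsBoundedExcursion H q)
    (hq' : IsBoundedExcursion H q') (h : node q r = node q' r') : q = q' ∧ r = r' := by
  rw [LatticePath.node, LatticePath.node, cons_inj_right] at h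
  have hlen := le_antisymm
    (length_le_of_append_false_cons_eq h.symm hq'.1 fun s hs => (hq.2 s hs).1)
    (length_le_of_append_false_cons_eq h hq.1 fun s hs => (hq'.2 s hs).1)
  obtain ⟨rfl, hr⟩ := append_inj h hlen
  exact ⟨rfl, cons_inj_right _ |>.mp hr⟩

theorem isBoundedExcursion_zero_iff {p : List Bool} : IsBoundedExcursion 0 p ↔ p = [] := by
  refine ⟨fun ⟨_, hp⟩ => ?_, by rintro rfl; exact isBoundedExcursion_nil 0⟩
  obtain _ | ⟨b, _⟩ := p
  · rfl
  · have := hp [b] (by simp)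
    cases b <;> simp at this

def excursions (H n : ℕ) : Set (List Bool) := {p | p.count true = n ∧ IsBoundedExcursion H p}

theorem finite_excursions (H n : ℕ) : (excursions H n).Finite :=
  (finite_length_eq Bool (2 * n)).subset fun _ ⟨hn, hp⟩ =>
    hn ▸ length_eq_two_mul_count_true hp.1

instance (H n : ℕ) : Finite (excursions H n) := (finite_excursions H n).to_subtype

theorem excursions_zero_right (H : ℕ) : excursions H 0 = {[]} := by
  ext p
  refine ⟨fun ⟨hn, hp⟩ => ?_, by rintro rfl; exact ⟨rfl, isBoundedExcursion_nil H⟩⟩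
  rw [Set.mem_singleton_iff, ← length_eq_zero_iff, length_eq_two_mul_count_true hp.1, hn]

theorem excursions_zero_succ (n : ℕ) : excursions 0 (n + 1) = ∅ :=
  Set.eq_empty_of_forall_notMem fun p ⟨hn, hp⟩ => by
    rw [isBoundedExcursion_zero_iff.mp hp] at hn
    simp at hn

open Finset in
theorem card_excursions_succ_succ (H n : ℕ) :
    Nat.card (excursions (H + 1) (n + 1)) =
      ∑ ij ∈ antidiagonal n, Nat.card (excursions H ij.1) * Nat.card (excursions (H + 1) ij.2) := by
  let f : (Σ ij : antidiagonal n, excursions H ij.1.1 × excursions (H + 1) ij.1.2) →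
      excursions (H + 1) (n + 1) := fun ⟨⟨_, hij⟩, q, r⟩ =>
    ⟨node q r, by simp [q.2.1, r.2.1, (mem_antidiagonal.mp hij)],
      isBoundedExcursion_node q.2.2 r.2.2⟩
  have hf : f.Bijective := by
    constructor
    · rintro ⟨⟨⟨i, j⟩, hij⟩, ⟨q, hq⟩, ⟨r, hr⟩⟩ ⟨⟨⟨i', j'⟩, hij'⟩, ⟨q', hq'⟩, ⟨r', hr'⟩⟩ h
      obtain ⟨rfl, rfl⟩ := hq.2.node_inj hq'.2 (congrArg Subtype.val h)
      obtain ⟨rfl, rfl⟩ : i = i' ∧ j = j' := ⟨hq.1.symm.trans hq'.1, hr.1.symm.trans hr'.1⟩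
      rfl
    · rintro ⟨p, hn, hp⟩
      have hne : p ≠ [] := by rintro rfl; simp at hn
      obtain ⟨q, r, rfl, hq, hr⟩ := hp.exists_eq_node hne
      exact ⟨⟨⟨(q.count true, r.count true), by simpa using hn⟩, ⟨q, rfl, hq⟩, ⟨r, rfl, hr⟩⟩, rfl⟩
  rw [← Nat.card_congr (Equiv.ofBijective f hf), Nat.card_sigma]
  simp only [Nat.card_prod]
  exact sum_coe_sort (antidiagonal n) fun ij =>
    Nat.card (excursions H ij.1) * Nat.card (excursions (H + 1) ij.2)

end LatticePath

open Polynomial Polynomial.Chebyshev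

theorem Polynomial.Chebyshev.coeff_U_eq_zero_of_odd (R : Type*) [CommRing R] (k i : ℕ)
    (h : Odd (k + i)) : (U R k).coeff i = 0 := by
  induction k using Nat.twoStepInduction generalizing i with
  | zero => simp [coeff_one, show i ≠ 0 by rintro rfl; simp at h]
  | one =>
    have : 1 ≠ i := by rintro rfl; exact absurd h (by decide)
    simp [coeff_X, this]
  | more k ih₀ ih₁ =>
    rw [Nat.odd_iff] at h
    have hU : U R (k + 2 : ℕ) = 2 * (X * U R (k + 1 : ℕ)) - U R k := by
      push_cast; rw [U_add_two]; ring
    rcases i with _ | i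
    · simp [ih₀ 0 (Nat.odd_iff.mpr (by omega))]
    · rw [hU, coeff_sub, coeff_ofNat_mul, coeff_X_mul, ih₀ _ (Nat.odd_iff.mpr (by omega)),
        ih₁ _ (Nat.odd_iff.mpr (by omega))]
      simp

theorem Polynomial.Chebyshev.eval_U_eq_sum (R : Type*) [CommRing R] [IsDomain R] [NeZero (2 : R)]
    (k : ℕ) (t : R) :
    (U R k).eval t =
      ∑ j ∈ Finset.range (k / 2 + 1), (U R k).coeff (k - 2 * j) * t ^ (k - 2 * j) := by
  rw [eval_eq_sum_range' (n := k + 1) (by rw [natDegree_U_natCast]; omega),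
    ← Finset.sum_image (g := fun j => k - 2 * j) (f := fun i => (U R k).coeff i * t ^ i)
    (fun a ha b hb hab => by simp only [Finset.coe_range, Set.mem_Iio] at ha hb hab; omega)]
  refine (Finset.sum_subset (fun i hi => ?_) fun i hi hni => ?_).symm
  · obtain ⟨j, hj, rfl⟩ := Finset.mem_image.mp hi
    simp only [Finset.mem_range] at hj ⊢; omega
  · simp only [Finset.mem_range, Finset.mem_image, not_exists, not_and] at hi hni
    have := hni ((k - i) / 2) (by omega)
    rw [coeff_U_eq_zero_of_odd _ _ _ (Nat.odd_iff.mpr (by omega)), zero_mul]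

theorem chebQ_eval (k : ℕ) (t : ℚ) (ht : t ≠ 0) :
    (chebQ k).eval (1 / (4 * t ^ 2)) * (2 * t) ^ k = (U ℚ k).eval t := by
  rw [eval_U_eq_sum, chebQ, eval_finsetSum, Finset.sum_mul]
  refine Finset.sum_congr rfl fun j hj => ?_
  obtain ⟨d, rfl⟩ : ∃ d, k = 2 * j + d := ⟨k - 2 * j, by rw [Finset.mem_range] at hj; omega⟩
  simp only [eval_mul, eval_C, eval_pow, eval_X, Nat.add_sub_cancel_left, pow_add, pow_mul]
  rw [show ((2 : ℚ) * t) ^ 2 = 4 * t ^ 2 by ring]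
  have key : (1 / (4 * t ^ 2)) ^ j * (4 * t ^ 2) ^ j = 1 := by
    rw [← mul_pow, one_div, inv_mul_cancel₀ (by positivity), one_pow]
  field_simp
  linear_combination ((U ℚ (2 * j + d : ℕ)).coeff d * (2 * t) ^ d) * key

theorem eq_of_eval_one_div_four_mul_sq_eq {K : Type*} [Field K] [CharZero K] {p q : K[X]}
    (h : ∀ t : K, t ≠ 0 → p.eval (1 / (4 * t ^ 2)) = q.eval (1 / (4 * t ^ 2))) : p = q := by
  refine eq_of_infinite_eval_eq p q (Set.infinite_of_injective_forall_mem
    (f := fun n : ℕ => 1 / (4 * ((n : K) + 1) ^ 2)) (fun a b hab => ?_)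
    fun n => h _ (Nat.cast_add_one_ne_zero n))
  simp only [one_div, inv_inj, mul_eq_mul_left_iff] at hab
  norm_cast at hab
  exact Nat.succ_injective (Nat.pow_left_injective two_ne_zero (hab.resolve_right id))

theorem chebQ_zero : chebQ 0 = 1 :=
  eq_of_eval_one_div_four_mul_sq_eq fun t ht => by simpa using chebQ_eval 0 t ht

theorem chebQ_one : chebQ 1 = 1 :=
  eq_of_eval_one_div_four_mul_sq_eq fun t ht => by
    have := chebQ_eval 1 t ht
    simp only [pow_one, Nat.cast_one, U_one, eval_mul, eval_ofNat, eval_X] at this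
    simpa [ht] using this

theorem chebQ_add_two (k : ℕ) : chebQ (k + 2) = chebQ (k + 1) - X * chebQ k := by
  refine eq_of_eval_one_div_four_mul_sq_eq fun t ht => ?_
  have h₂ := chebQ_eval (k + 2) t ht
  have h₁ := chebQ_eval (k + 1) t ht
  have h₀ := chebQ_eval k t ht
  push_cast at h₂ h₁
  rw [U_add_two, eval_sub, eval_mul, eval_mul, eval_ofNat, eval_X] at h₂
  have hx : 1 / (4 * t ^ 2) * (2 * t) ^ (k + 2) = (2 * t) ^ k := by
    field_simp; ring
  refine mul_right_cancel₀ (pow_ne_zero (k + 2) (mul_ne_zero two_ne_zero ht)) ?_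
  simp only [eval_sub, eval_mul, eval_X]
  linear_combination h₂ - 2 * t * h₁ + h₀ + (chebQ k).eval (1 / (4 * t ^ 2)) * hx

theorem coeff_chebQ_zero (k : ℕ) : (chebQ k).coeff 0 = 1 := by
  induction k using Nat.twoStepInduction with
  | zero => simp [chebQ_zero]
  | one => simp [chebQ_one]
  | more k _ ih => simp [chebQ_add_two, ih]

open LatticePath

noncomputable def excursionGF (H : ℕ) : PowerSeries ℚ :=
  PowerSeries.mk fun n => (Nat.card (excursions H n) : ℚ)

theorem excursionGF_zero : excursionGF 0 = 1 := by
  ext (_ | n) <;>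
    simp [excursionGF, excursions_zero_right, excursions_zero_succ, PowerSeries.coeff_one]

theorem excursionGF_succ (H : ℕ) :
    excursionGF (H + 1) = 1 + PowerSeries.X * (excursionGF H * excursionGF (H + 1)) := by
  ext (_ | n)
  · simp [excursionGF, excursions_zero_right]
  · rw [map_add, PowerSeries.coeff_one, PowerSeries.coeff_succ_X_mul, PowerSeries.coeff_mul]
    simp only [excursionGF, PowerSeries.coeff_mk, card_excursions_succ_succ, Nat.cast_sum,
      Nat.cast_mul, Nat.add_one_ne_zero, if_false, zero_add]

theorem excursionGF_mul_chebQ (H : ℕ) : excursionGF H * chebQ (H + 1) = chebQ H := by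
  induction H with
  | zero => rw [excursionGF_zero, chebQ_zero, chebQ_one, one_mul]
  | succ H ih =>
    rw [chebQ_add_two, Polynomial.coe_sub, Polynomial.coe_mul, Polynomial.coe_X]
    linear_combination (chebQ (H + 1) : PowerSeries ℚ) * excursionGF_succ H +
      (PowerSeries.X * excursionGF (H + 1)) * ih

theorem excursionGF_eq (H : ℕ) :
    excursionGF H = chebQ H * (chebQ (H + 1) : PowerSeries ℚ)⁻¹ := by
  rw [← excursionGF_mul_chebQ, mul_assoc,
    PowerSeries.mul_inv_cancel _ (by simp [coeff_chebQ_zero]), mul_one]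

theorem card_isDyckPath_heightLE (n H : ℕ) :
    Nat.card {p : List Bool // IsDyckPath n p ∧ HeightLE p H} = Nat.card (excursions H n) :=
  Nat.card_congr (Equiv.subtypeEquivRight fun _ => isDyckPath_and_heightLE_iff)

/-- For `m ≥ 2`, the quotient `U_{m-2}(1/(2√x)) / (√x · U_{m-1}(1/(2√x)))` of Chebyshev
polynomials of the second kind, regarded as a power series in `x` (it equals
`chebQ (m-2) / chebQ (m-1)`, since `chebQ k = x^(k/2)·U_k(1/(2√x))`, as certified by
the second conjunct), is the generating function for Dyck paths of height at most
`m-2`: its `n`-th coefficient is the number of Dyck paths of semilength `n` of height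
at most `m-2`. -/
theorem dyck_bounded_height_chebyshev (m : ℕ) (hm : 2 ≤ m) :
    (∀ n : ℕ, 1 ≤ n →
      (Nat.card {p : List Bool // IsDyckPath n p ∧ HeightLE p (m - 2)} : ℚ) =
        PowerSeries.coeff (R := ℚ) n
          ((chebQ (m - 2) : PowerSeries ℚ) * ((chebQ (m - 1) : PowerSeries ℚ))⁻¹)) ∧
    ∀ k : ℕ, ∀ t : ℚ, t ≠ 0 →
      (chebQ k).eval (1 / (4 * t ^ 2)) * (2 * t) ^ k =
        (Polynomial.Chebyshev.U ℚ k).eval t := by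
  refine ⟨fun n _ => ?_, chebQ_eval⟩
  obtain ⟨H, rfl⟩ : ∃ H, m = H + 2 := ⟨m - 2, by omega⟩
  rw [card_isDyckPath_heightLE, Nat.add_sub_cancel, show H + 2 - 1 = H + 1 by omega,
    ← excursionGF_eq, excursionGF, PowerSeries.coeff_mk]
end
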